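/- arXiv:1503.01599 — 7 statements merged into one kernel-verified Lean document; each statement's English description precedes it below -/
import Mathlib

section
/- Let (G,P,θ) be an algebraic dynamical system and write X_{(g,p)} = (g,p)·(G ⋊_θ P) for the principal right ideal of G ⋊_θ P generated by (g,p). For all g,h ∈ G and p,q ∈ P: if there exist r ∈ P with pP ∩ qP = rP and k ∈ G with g·θ_p(k) ∈ h·θ_q(G), then X_{(g,p)} ∩ X_{(h,q)} = X_{(g·θ_p(k),r)}; otherwise X_{(g,p)} ∩ X_{(h,q)} = ∅. -/
open Pointwise

/-- The principal right ideal `pS` of a monoid `S`. -/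
def rIdeal {S : Type*} [Monoid S] (p : S) : Set S :=
  Set.range fun s => p * s

/-- An algebraic dynamical system: a group `G`, a right LCM monoid `P`, and an action `θ` of
`P` by injective group endomorphisms of `G` which respects the order on `P`. -/
structure AlgDynSys (G P : Type*) [Group G] [Monoid P] where
  θ : P → G → G
  θ_hom : ∀ p a b, θ p (a * b) = θ p a * θ p b
  θ_one : ∀ a, θ 1 a = a
  θ_mul : ∀ p q a, θ (p * q) a = θ p (θ q a)
  θ_inj : ∀ p, Function.Injective (θ p)
  left_cancel : ∀ a b c : P, a * b = a * c → b = c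
  lcm : ∀ p q : P, rIdeal p ∩ rIdeal q = ∅ ∨ ∃ r, rIdeal p ∩ rIdeal q = rIdeal r
  respects : ∀ p q r : P, rIdeal p ∩ rIdeal q = rIdeal r →
    Set.range (θ p) ∩ Set.range (θ q) = Set.range (θ r)

namespace AlgDynSys

variable {G P : Type*} [Group G] [Monoid P]

/-- The multiplication of the semidirect product `G ⋊_θ P` on `G × P`. -/
def sdMul (A : AlgDynSys G P) (x y : G × P) : G × P :=
  (x.1 * A.θ x.2 y.1, x.2 * y.2)

/-- The principal right ideal `x · (G ⋊_θ P)` of the semidirect product. -/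
def sdIdeal (A : AlgDynSys G P) (x : G × P) : Set (G × P) :=
  Set.range (A.sdMul x)

end AlgDynSys

/-! The ideal `X_{(g,p)}` is the product `g θ_p(G) × pP`, so the intersection splits
coordinatewise. In `P` the right LCM property gives `pP ∩ qP = rP`; in `G` two left cosets
`g H`, `h K` of subgroups that share a point `c` meet in `c (H ∩ K)`, and
`θ_p(G) ∩ θ_q(G) = θ_r(G)`. -/

theorem Subgroup.leftCoset_inter_leftCoset {G : Type*} [Group G] {H K : Subgroup G} {g h c : G}
    (hg : c ∈ g • (H : Set G)) (hh : c ∈ h • (K : Set G)) :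
    g • (H : Set G) ∩ h • (K : Set G) = c • ((H ⊓ K : Subgroup G) : Set G) := by
  rw [mem_leftCoset_iff] at hg hh
  rw [(leftCoset_eq_iff H).mpr hg, (leftCoset_eq_iff K).mpr hh, Subgroup.coe_inf,
    Set.smul_set_inter]

namespace AlgDynSys

variable {G P : Type*} [Group G] [Monoid P] (A : AlgDynSys G P)

def θHom (p : P) : G →* G :=
  MonoidHom.mk' (A.θ p) (A.θ_hom p)

theorem coe_θHom_range (p : P) : ((A.θHom p).range : Set G) = Set.range (A.θ p) :=
  MonoidHom.coe_range _

theorem θHom_range_inf {p q r : P} (hr : rIdeal p ∩ rIdeal q = rIdeal r) :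
    (A.θHom p).range ⊓ (A.θHom q).range = (A.θHom r).range :=
  SetLike.coe_injective <| by
    simpa only [Subgroup.coe_inf, coe_θHom_range] using A.respects p q r hr

theorem sdIdeal_eq_prod (g : G) (p : P) :
    A.sdIdeal (g, p) = (g • ((A.θHom p).range : Set G)) ×ˢ rIdeal p := by
  ext ⟨x, s⟩
  simp [sdIdeal, sdMul, rIdeal, θHom, Set.mem_smul_set, eq_comm]

end AlgDynSys

/-- description of intersections of principal right ideals
`X_{(g,p)} ∩ X_{(h,q)}` in the semidirect product `G ⋊_θ P`. -/
theorem sdp_ideal_intersection {G P : Type*} [Group G] [Monoid P]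
    (A : AlgDynSys G P) (g h : G) (p q : P) :
    (∀ (r : P) (k : G), rIdeal p ∩ rIdeal q = rIdeal r →
      (∃ l : G, g * A.θ p k = h * A.θ q l) →
      A.sdIdeal (g, p) ∩ A.sdIdeal (h, q) = A.sdIdeal (g * A.θ p k, r)) ∧
    (¬ (∃ r : P, rIdeal p ∩ rIdeal q = rIdeal r ∧
        ∃ k l : G, g * A.θ p k = h * A.θ q l) →
      A.sdIdeal (g, p) ∩ A.sdIdeal (h, q) = ∅) := by
  simp only [A.sdIdeal_eq_prod, Set.prod_inter_prod]
  refine ⟨fun r k hr ⟨l, hkl⟩ => ?_, fun hne => ?_⟩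
  · have hg : g * A.θ p k ∈ g • ((A.θHom p).range : Set G) := mem_leftCoset g ⟨k, rfl⟩
    have hh : g * A.θ p k ∈ h • ((A.θHom q).range : Set G) :=
      hkl ▸ mem_leftCoset h ⟨l, rfl⟩
    rw [Subgroup.leftCoset_inter_leftCoset hg hh, A.θHom_range_inf hr, hr]
  · refine Set.eq_empty_of_forall_notMem fun ⟨x, s⟩ ⟨hx, hs⟩ => hne ?_
    obtain ⟨r, hr⟩ := (A.lcm p q).resolve_left (Set.nonempty_iff_ne_empty.mp ⟨s, hs⟩)
    obtain ⟨⟨_, ⟨k, rfl⟩, hk⟩, ⟨_, ⟨l, rfl⟩, hl⟩⟩ := hx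
    exact ⟨r, hr, k, l, hk.trans hl.symm⟩
end

section
/- Let (G,P,θ) be an algebraic dynamical system and let S = G ⋊_θ P. The family of principal right ideals of S is independent: if a principal right ideal X of S is the union of finitely many principal right ideals X₁,…,Xₙ of S, then X = X_j for some j ∈ {1,…,n}. -/
open Pointwise

namespace AlgDynSys

variable {G P : Type*} [Group G] [Monoid P] (A : AlgDynSys G P)

theorem θ_map_one (p : P) : A.θ p 1 = 1 := by
  simpa using (A.θ_hom p 1 1).symm

theorem sdMul_assoc (x y z : G × P) :
    A.sdMul (A.sdMul x y) z = A.sdMul x (A.sdMul y z) := by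
  simp [sdMul, A.θ_mul, A.θ_hom, mul_assoc]

theorem sdMul_one_right (x : G × P) : A.sdMul x (1, 1) = x := by
  simp [sdMul, A.θ_map_one]

theorem mem_sdIdeal_self (x : G × P) : x ∈ A.sdIdeal x :=
  ⟨(1, 1), A.sdMul_one_right x⟩

theorem sdIdeal_subset_of_mem {x y : G × P} (hxy : x ∈ A.sdIdeal y) :
    A.sdIdeal x ⊆ A.sdIdeal y := by
  obtain ⟨s, rfl⟩ := hxy
  rintro _ ⟨t, rfl⟩
  exact ⟨A.sdMul s t, (A.sdMul_assoc y s t).symm⟩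

end AlgDynSys

/-- the family of principal right ideals of `S = G ⋊_θ P` is independent:
if a principal right ideal is a finite union of principal right ideals, it equals one
of them. -/
theorem sdp_ideals_independent {G P : Type*} [Group G] [Monoid P]
    (A : AlgDynSys G P) (n : ℕ) (x : G × P) (xs : Fin n → G × P)
    (h : A.sdIdeal x = ⋃ j, A.sdIdeal (xs j)) :
    ∃ j, A.sdIdeal x = A.sdIdeal (xs j) := by
  obtain ⟨j, hj⟩ := Set.mem_iUnion.mp (h ▸ A.mem_sdIdeal_self x)
  refine ⟨j, (A.sdIdeal_subset_of_mem hj).antisymm ?_⟩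
  exact h ▸ Set.subset_iUnion (fun i => A.sdIdeal (xs i)) j
end

section
/- Let (G,P,θ) be an algebraic dynamical system. Then the semidirect product G ⋊_θ P is a right LCM monoid: it is left cancellative, and for all (g,p),(h,q) ∈ G ⋊_θ P the intersection (g,p)(G ⋊_θ P) ∩ (h,q)(G ⋊_θ P) is either empty or a principal right ideal of G ⋊_θ P. -/
open Pointwise

/-!
An element `(g, p)` of `G ⋊_θ P` generates the right ideal of all `(k, s)` with `s ∈ pP` and
`k ∈ g θ_p(G)`, a product of an ideal of `P` and a left coset of the subgroup `θ_p(G)`.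
Two left cosets `g θ_p(G)` and `h θ_q(G)` meet, if at all, in a coset `f (θ_p(G) ∩ θ_q(G))`,
and when `pP ∩ qP = rP` this subgroup is `θ_r(G)`. Hence any `(f, s)` in the intersection of
two principal right ideals yields the generator `(f, r)` of that intersection.
-/

theorem Subgroup.inv_mul_mem_and_inv_mul_mem_iff {G : Type*} [Group G] {H K : Subgroup G}
    {g h f : G} (hg : g⁻¹ * f ∈ H) (hh : h⁻¹ * f ∈ K) (k : G) :
    g⁻¹ * k ∈ H ∧ h⁻¹ * k ∈ K ↔ f⁻¹ * k ∈ H ⊓ K := by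
  have hgk : g⁻¹ * k = g⁻¹ * f * (f⁻¹ * k) := by group
  have hhk : h⁻¹ * k = h⁻¹ * f * (f⁻¹ * k) := by group
  rw [hgk, hhk, H.mul_mem_cancel_left hg, K.mul_mem_cancel_left hh, Subgroup.mem_inf]

namespace AlgDynSys

variable {G P : Type*} [Group G] [Monoid P] (A : AlgDynSys G P)

@[simp]
theorem θHom_apply (p : P) (a : G) : A.θHom p a = A.θ p a :=
  rfl

theorem sdMul_left_cancel {x y z : G × P} (h : A.sdMul x y = A.sdMul x z) : y = z := by
  obtain ⟨h₁, h₂⟩ := Prod.mk.inj h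
  exact Prod.ext (A.θ_inj x.2 (mul_left_cancel h₁)) (A.left_cancel _ _ _ h₂)

theorem mem_sdIdeal_iff {g k : G} {p s : P} :
    (k, s) ∈ A.sdIdeal (g, p) ↔ g⁻¹ * k ∈ (A.θHom p).range ∧ s ∈ rIdeal p := by
  constructor
  · rintro ⟨⟨c, u⟩, hcu⟩
    obtain ⟨rfl, rfl⟩ := Prod.mk.inj hcu
    exact ⟨⟨c, by simp⟩, ⟨u, rfl⟩⟩
  · rintro ⟨⟨c, hc⟩, u, rfl⟩
    rw [θHom_apply] at hc
    exact ⟨(c, u), by simp [sdMul, hc]⟩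

theorem sdIdeal_inter_sdIdeal {g h f : G} {p q r : P}
    (hg : g⁻¹ * f ∈ (A.θHom p).range) (hh : h⁻¹ * f ∈ (A.θHom q).range)
    (hr : rIdeal p ∩ rIdeal q = rIdeal r) :
    A.sdIdeal (g, p) ∩ A.sdIdeal (h, q) = A.sdIdeal (f, r) := by
  ext ⟨k, s⟩
  rw [Set.mem_inter_iff, mem_sdIdeal_iff, mem_sdIdeal_iff, mem_sdIdeal_iff, ← hr,
    ← A.θHom_range_inf hr, ← Subgroup.inv_mul_mem_and_inv_mul_mem_iff hg hh, Set.mem_inter_iff]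
  tauto

end AlgDynSys

/-- the semidirect product `G ⋊_θ P` of an algebraic dynamical system is a
right LCM monoid: it is left cancellative and intersections of principal right ideals
are empty or principal. -/
theorem sdp_right_LCM {G P : Type*} [Group G] [Monoid P] (A : AlgDynSys G P) :
    (∀ x y z : G × P, A.sdMul x y = A.sdMul x z → y = z) ∧
    (∀ x y : G × P,
      A.sdIdeal x ∩ A.sdIdeal y = ∅ ∨ ∃ z, A.sdIdeal x ∩ A.sdIdeal y = A.sdIdeal z) := by
  refine ⟨fun _ _ _ => A.sdMul_left_cancel, fun ⟨g, p⟩ ⟨h, q⟩ => ?_⟩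
  rcases Set.eq_empty_or_nonempty (A.sdIdeal (g, p) ∩ A.sdIdeal (h, q)) with hempty | hne
  · exact Or.inl hempty
  obtain ⟨⟨f, s⟩, hfp, hfq⟩ := hne
  rw [A.mem_sdIdeal_iff] at hfp hfq
  rcases A.lcm p q with hpq | ⟨r, hr⟩
  · exact (Set.eq_empty_iff_forall_notMem.mp hpq s ⟨hfp.2, hfq.2⟩).elim
  · exact Or.inr ⟨(f, r), A.sdIdeal_inter_sdIdeal hfp.1 hfq.1 hr⟩
end

section
/- Let (G,P,θ) be an algebraic dynamical system. Then the semidirect product G ⋊_θ P is a left Ore semigroup (i.e. cancellative and right reversible) if and only if P is a left Ore semigroup. -/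
open Pointwise

/-!
`P` sits inside `G ⋊_θ P` as the submonoid `{1} × P` and is its quotient under the projection to
the second coordinate; the first transfers right cancellativity and the second right reversibility from
`G ⋊_θ P` to `P`. Conversely, `G ⋊_θ P` is always left cancellative, because `P` is and each `θ_p`
is injective; right cancellation in `G ⋊_θ P` reduces to right cancellation in `P` because `G` is a
group; and `c p = d q` in `P` gives `(θ_d(h) θ_c(g)⁻¹, c) (g, p) = (1, d) (h, q)`.
-/

namespace AlgDynSys

variable {G P : Type*} [Group G] [Monoid P] (A : AlgDynSys G P)

theorem sdMul_one_one (p q : P) : A.sdMul (1, p) (1, q) = (1, p * q) := by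
  simp only [sdMul, θ_map_one, mul_one]

theorem sdMul_right_cancel (hP : ∀ a b c : P, a * c = b * c → a = b) {x y z : G × P}
    (h : A.sdMul x z = A.sdMul y z) : x = y := by
  have hsnd : x.2 = y.2 := hP _ _ _ (congrArg Prod.snd h)
  have hfst : x.1 * A.θ y.2 z.1 = y.1 * A.θ y.2 z.1 := by
    simpa only [sdMul, hsnd] using congrArg Prod.fst h
  exact Prod.ext (mul_right_cancel hfst) hsnd

theorem right_cancel_of_sdMul_right_cancel
    (h : ∀ x y z : G × P, A.sdMul x z = A.sdMul y z → x = y) {a b c : P} (habc : a * c = b * c) :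
    a = b :=
  congrArg Prod.snd (h (1, a) (1, b) (1, c) (by rw [sdMul_one_one, sdMul_one_one, habc]))

theorem sdMul_eq_of_mul_eq {x y : G × P} {c d : P} (h : c * x.2 = d * y.2) :
    A.sdMul (A.θ d y.1 * (A.θ c x.1)⁻¹, c) x = A.sdMul (1, d) y :=
  Prod.ext (by simp only [sdMul, inv_mul_cancel_right, one_mul]) h

end AlgDynSys

/-- `G ⋊_θ P` is a left Ore semigroup (cancellative and right reversible)
iff `P` is a left Ore semigroup. -/
theorem sdp_left_ore_iff {G P : Type*} [Group G] [Monoid P] (A : AlgDynSys G P) :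
    ((∀ x y z : G × P, A.sdMul x y = A.sdMul x z → y = z) ∧
     (∀ x y z : G × P, A.sdMul x z = A.sdMul y z → x = y) ∧
     (∀ x y : G × P, ∃ a b : G × P, A.sdMul a x = A.sdMul b y)) ↔
    ((∀ a b c : P, a * b = a * c → b = c) ∧
     (∀ a b c : P, a * c = b * c → a = b) ∧
     (∀ a b : P, ∃ c d : P, c * a = d * b)) := by
  constructor
  · rintro ⟨-, hr, hrev⟩
    refine ⟨A.left_cancel, fun a b c => A.right_cancel_of_sdMul_right_cancel hr, fun a b => ?_⟩
    obtain ⟨x, y, hxy⟩ := hrev (1, a) (1, b)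
    exact ⟨x.2, y.2, congrArg Prod.snd hxy⟩
  · rintro ⟨-, hr, hrev⟩
    refine ⟨fun x y z => A.sdMul_left_cancel, fun x y z => A.sdMul_right_cancel hr, fun x y => ?_⟩
    obtain ⟨c, d, hcd⟩ := hrev x.2 y.2
    exact ⟨_, _, A.sdMul_eq_of_mul_eq hcd⟩
end

section
/- Let S be a right LCM monoid, let 𝒢 be a group, and let ι: S → 𝒢 be an injective monoid homomorphism such that every g ∈ 𝒢 can be written as g = ι(s)⁻¹·ι(t) for some s,t ∈ S. Then the stabiliser of the subset ι(S) ⊆ 𝒢 under left multiplication equals the image of the group of units: {g ∈ 𝒢 : g·ι(S) = ι(S)} = ι(S*). -/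
open Pointwise

theorem MonoidHom.image_mul_left_range_of_isUnit {M N : Type*} [Monoid M] [Monoid N]
    (f : M →* N) {u : M} (hu : IsUnit u) :
    (fun x => f u * x) '' Set.range f = Set.range f := by
  have hcomm : (fun x => f u * x) ∘ f = f ∘ (fun x => u * x) :=
    funext fun x => (map_mul f u x).symm
  have hsurj : Function.Surjective (fun x => u * x) :=
    (IsUnit.isUnit_iff_mulLeft_bijective.mp hu).surjective
  rw [← Set.range_comp, hcomm, hsurj.range_comp]

theorem MonoidHom.mem_image_isUnit_of_image_mul_left_range_eq {M G : Type*} [Monoid M]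
    [Group G] {f : M →* G} (hf : Function.Injective f) {g : G}
    (hg : (fun x => g * x) '' Set.range f = Set.range f) :
    g ∈ f '' {a : M | IsUnit a} := by
  obtain ⟨a, rfl⟩ : g ∈ Set.range f := by
    rw [← hg]
    exact ⟨f 1, Set.mem_range_self 1, by simp⟩
  obtain ⟨_, ⟨b, rfl⟩, hab⟩ : (1 : G) ∈ (fun x => f a * x) '' Set.range f := by
    rw [hg]
    exact ⟨1, map_one f⟩
  -- `f a * f b = 1` in a group forces `f b * f a = 1`; injectivity pulls both back to `M`.
  have : IsDedekindFiniteMonoid M := IsDedekindFiniteMonoid.of_injective f hf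
  exact ⟨a, IsUnit.of_mul_eq_one b (hf (by simpa using hab)), rfl⟩

theorem stabiliser_of_S_is_units_general {S 𝒢 : Type*} [Monoid S] [Group 𝒢]
    (ι : S →* 𝒢) (hinj : Function.Injective ι) :
    {g : 𝒢 | (fun x => g * x) '' Set.range ι = Set.range ι} =
      ι '' {s : S | IsUnit s} := by
  ext g
  constructor
  · exact ι.mem_image_isUnit_of_image_mul_left_range_eq hinj
  · rintro ⟨s, hs, rfl⟩
    exact ι.image_mul_left_range_of_isUnit hs

/-- for a right LCM monoid `S` embedded in a group `𝒢 = S⁻¹S`, the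
stabiliser of `ι(S)` under left multiplication is `ι(S*)`. -/
theorem stabiliser_of_S_is_units {S 𝒢 : Type*} [Monoid S] [Group 𝒢]
    (hcancel : ∀ a b c : S, a * b = a * c → b = c)
    (hlcm : ∀ p q : S, rIdeal p ∩ rIdeal q = ∅ ∨ ∃ r, rIdeal p ∩ rIdeal q = rIdeal r)
    (ι : S →* 𝒢) (hinj : Function.Injective ι)
    (hgen : ∀ g : 𝒢, ∃ s t : S, g = (ι s)⁻¹ * ι t) :
    {g : 𝒢 | (fun x => g * x) '' Set.range ι = Set.range ι} =
      ι '' {s : S | IsUnit s} :=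
  stabiliser_of_S_is_units_general ι hinj
end

section
/- Let P be a right LCM monoid and G₀ a group, and let G = ⊕_P G₀ be the direct sum (the group of finitely supported functions P → G₀ under pointwise multiplication). For p ∈ P define θ_p: G → G by (θ_p f)(r) = f(q) if r = pq for some (necessarily unique) q ∈ P, and (θ_p f)(r) = 1 if r ∉ pP. Then: each θ_p is an injective group endomorphism of G with image θ_p(G) = {f ∈ G : supp(f) ⊆ pP}; θ_1 = id and θ_{pq} = θ_p ∘ θ_q for all p,q ∈ P; and whenever p,q,r ∈ P satisfy pP ∩ qP = rP one has θ_p(G) ∩ θ_q(G) = θ_r(G). Hence (G,P,θ) is an algebraic dynamical system. -/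
open Pointwise

open scoped Classical

/-- The shift endomorphism of `∏_P G₀` along `p ∈ P`:
`(θ_p f)(r) = f(q)` if `r = pq`, and `1` otherwise. -/
noncomputable def shift {P : Type*} [Monoid P] {G₀ : Type*} [Group G₀]
    (p : P) (f : P → G₀) : P → G₀ :=
  fun r => if h : ∃ q : P, r = p * q then f h.choose else 1

/-!
With left cancellation, `θ_p` is inverted on its image by `g ↦ g(p · _)`, so `θ_p(G)` is exactly
the set of finitely supported functions supported in `pP`. The order condition then reduces to
`supp g ⊆ pP ∩ qP = rP`.
-/

open Function

section Shift

variable {P G₀ : Type*} [Monoid P] [Group G₀]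

lemma shift_apply_of_notMem_rIdeal {p r : P} (f : P → G₀) (h : r ∉ rIdeal p) :
    shift p f r = 1 :=
  dif_neg fun ⟨q, hq⟩ => h ⟨q, hq.symm⟩

lemma shift_apply_mul [IsLeftCancelMul P] (p q : P) (f : P → G₀) :
    shift p f (p * q) = f q := by
  have hq : ∃ s, p * q = p * s := ⟨q, rfl⟩
  rw [shift, dif_pos hq, mul_left_cancel hq.choose_spec.symm]

lemma mul_left_image_rIdeal (p q : P) : (p * ·) '' rIdeal q ⊆ rIdeal (p * q) := by
  rintro _ ⟨_, ⟨s, rfl⟩, rfl⟩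
  exact ⟨s, mul_assoc p q s⟩

lemma mulSupport_shift_subset_image (p : P) (f : P → G₀) :
    mulSupport (shift p f) ⊆ (p * ·) '' mulSupport f := by
  intro r hr
  by_cases h : ∃ q, r = p * q
  · refine ⟨h.choose, fun hf => hr ?_, h.choose_spec.symm⟩
    rw [shift, dif_pos h, hf]
  · exact absurd (dif_neg h) hr

lemma mulSupport_shift_subset_rIdeal (p : P) (f : P → G₀) :
    mulSupport (shift p f) ⊆ rIdeal p :=
  (mulSupport_shift_subset_image p f).trans (Set.image_subset_range _ _)

lemma eq_of_mulSupport_subset_rIdeal {p : P} {f g : P → G₀} (hf : mulSupport f ⊆ rIdeal p)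
    (hg : mulSupport g ⊆ rIdeal p) (h : ∀ q, f (p * q) = g (p * q)) : f = g := by
  funext r
  by_cases hr : r ∈ rIdeal p
  · obtain ⟨q, rfl⟩ := hr
    exact h q
  · rw [notMem_mulSupport.mp (mt (@hf r) hr), notMem_mulSupport.mp (mt (@hg r) hr)]

lemma shift_mul (p : P) (f g : P → G₀) : shift p (f * g) = shift p f * shift p g := by
  funext r
  by_cases h : ∃ q, r = p * q
  · simp only [shift, dif_pos h, Pi.mul_apply]
  · simp only [shift, dif_neg h, Pi.mul_apply, mul_one]

variable [IsLeftCancelMul P]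

lemma shift_injective (p : P) : Injective (shift (G₀ := G₀) p) := fun f g hfg =>
  funext fun q => by simpa only [shift_apply_mul] using congrFun hfg (p * q)

lemma shift_one (f : P → G₀) : shift 1 f = f :=
  funext fun r => by simpa only [one_mul] using shift_apply_mul 1 r f

lemma shift_shift (p q : P) (f : P → G₀) : shift p (shift q f) = shift (p * q) f := by
  refine eq_of_mulSupport_subset_rIdeal (p := p * q) ?_ (mulSupport_shift_subset_rIdeal _ _)
    fun s => ?_
  · exact (mulSupport_shift_subset_image p _).trans
      ((Set.image_mono (mulSupport_shift_subset_rIdeal q f)).trans (mul_left_image_rIdeal p q))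
  · rw [mul_assoc, shift_apply_mul, shift_apply_mul, ← mul_assoc, shift_apply_mul]

lemma shift_comp_mul_left {p : P} {g : P → G₀} (hg : mulSupport g ⊆ rIdeal p) :
    shift p (fun q => g (p * q)) = g :=
  eq_of_mulSupport_subset_rIdeal (mulSupport_shift_subset_rIdeal _ _) hg
    fun q => shift_apply_mul p q _

lemma shift_image (p : P) :
    shift (G₀ := G₀) p '' {f | (mulSupport f).Finite} =
      {f | (mulSupport f).Finite ∧ mulSupport f ⊆ rIdeal p} := by
  ext g
  constructor
  · rintro ⟨f, hf, rfl⟩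
    exact ⟨(hf.image _).subset (mulSupport_shift_subset_image p f),
      mulSupport_shift_subset_rIdeal p f⟩
  · rintro ⟨hg, hgp⟩
    refine ⟨fun q => g (p * q), ?_, shift_comp_mul_left hgp⟩
    exact hg.preimage (mul_right_injective p).injOn

lemma shift_image_inter_shift_image {p q r : P} (hr : rIdeal p ∩ rIdeal q = rIdeal r) :
    shift (G₀ := G₀) p '' {f | (mulSupport f).Finite} ∩
        shift (G₀ := G₀) q '' {f | (mulSupport f).Finite} =
      shift (G₀ := G₀) r '' {f | (mulSupport f).Finite} := by
  ext g
  simp only [shift_image, Set.mem_inter_iff, Set.mem_ofPred_eq, ← hr, Set.subset_inter_iff]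
  tauto

end Shift

theorem shift_algebraic_dynamical_system_general {P G₀ : Type*} [Monoid P] [Group G₀]
    (hcancel : ∀ a b c : P, a * b = a * c → b = c) :
    (∀ p : P, ∀ f : P → G₀, (Function.mulSupport f).Finite →
      (Function.mulSupport (shift p f)).Finite) ∧
    (∀ (p : P) (f g : P → G₀), (Function.mulSupport f).Finite →
      (Function.mulSupport g).Finite → shift p (f * g) = shift p f * shift p g) ∧
    (∀ p : P, Set.InjOn (shift (G₀ := G₀) p) {f | (Function.mulSupport f).Finite}) ∧
    (∀ p : P, shift (G₀ := G₀) p '' {f | (Function.mulSupport f).Finite} =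
      {f | (Function.mulSupport f).Finite ∧ Function.mulSupport f ⊆ rIdeal p}) ∧
    (∀ f : P → G₀, (Function.mulSupport f).Finite → shift (1 : P) f = f) ∧
    (∀ (p q : P) (f : P → G₀), (Function.mulSupport f).Finite →
      shift (p * q) f = shift p (shift q f)) ∧
    (∀ p q r : P, rIdeal p ∩ rIdeal q = rIdeal r →
      (shift (G₀ := G₀) p '' {f | (Function.mulSupport f).Finite}) ∩
        (shift (G₀ := G₀) q '' {f | (Function.mulSupport f).Finite}) =
          shift (G₀ := G₀) r '' {f | (Function.mulSupport f).Finite}) := by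
  have : IsLeftCancelMul P := ⟨fun a _ _ => hcancel a _ _⟩
  exact ⟨fun p f hf => (hf.image _).subset (mulSupport_shift_subset_image p f),
    fun p f g _ _ => shift_mul p f g,
    fun p => (shift_injective p).injOn,
    shift_image,
    fun f _ => shift_one f,
    fun p q f _ => (shift_shift p q f).symm,
    fun _ _ _ => shift_image_inter_shift_image⟩

/-- for a right LCM monoid `P` and a group `G₀`, the shift action `θ` on the
direct sum `G = ⊕_P G₀` (finitely supported functions `P → G₀`) consists of injective
group endomorphisms with `θ_p(G) = {f ∈ G : supp f ⊆ pP}`, satisfies `θ_1 = id`,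
`θ_{pq} = θ_p ∘ θ_q`, and respects the order on `P`; hence `(G,P,θ)` is an algebraic
dynamical system. -/
theorem shift_algebraic_dynamical_system {P G₀ : Type*} [Monoid P] [Group G₀]
    (hcancel : ∀ a b c : P, a * b = a * c → b = c)
    (hlcm : ∀ p q : P, rIdeal p ∩ rIdeal q = ∅ ∨ ∃ r, rIdeal p ∩ rIdeal q = rIdeal r) :
    (∀ p : P, ∀ f : P → G₀, (Function.mulSupport f).Finite →
      (Function.mulSupport (shift p f)).Finite) ∧
    (∀ (p : P) (f g : P → G₀), (Function.mulSupport f).Finite →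
      (Function.mulSupport g).Finite → shift p (f * g) = shift p f * shift p g) ∧
    (∀ p : P, Set.InjOn (shift (G₀ := G₀) p) {f | (Function.mulSupport f).Finite}) ∧
    (∀ p : P, shift (G₀ := G₀) p '' {f | (Function.mulSupport f).Finite} =
      {f | (Function.mulSupport f).Finite ∧ Function.mulSupport f ⊆ rIdeal p}) ∧
    (∀ f : P → G₀, (Function.mulSupport f).Finite → shift (1 : P) f = f) ∧
    (∀ (p q : P) (f : P → G₀), (Function.mulSupport f).Finite →
      shift (p * q) f = shift p (shift q f)) ∧
    (∀ p q r : P, rIdeal p ∩ rIdeal q = rIdeal r →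
      (shift (G₀ := G₀) p '' {f | (Function.mulSupport f).Finite}) ∩
        (shift (G₀ := G₀) q '' {f | (Function.mulSupport f).Finite}) =
          shift (G₀ := G₀) r '' {f | (Function.mulSupport f).Finite}) :=
  shift_algebraic_dynamical_system_general hcancel
end

section
/- Let (G,P,θ) be an algebraic dynamical system, and let p,q,r,p',q' ∈ P satisfy pP ∩ qP = rP and p·p' = q·q' = r. If k,ℓ,k₁,ℓ₁ ∈ G satisfy θ_p(k)·θ_q(ℓ)⁻¹ = θ_p(k₁)·θ_q(ℓ₁)⁻¹, then there exists k₂ ∈ G such that k⁻¹·k₁ = θ_{p'}(k₂) and ℓ⁻¹·ℓ₁ = θ_{q'}(k₂). -/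
/-! Cross-multiplying the hypothesis gives `θ_p(k⁻¹k₁) = θ_q(ℓ⁻¹ℓ₁)`. Since `θ` respects the
order, this common value of `θ_p` and `θ_q` is `θ_r(k₂) = θ_p(θ_{p'}(k₂)) = θ_q(θ_{q'}(k₂))`
for some `k₂`, and injectivity of `θ_p` and `θ_q` finishes the proof. -/

open Pointwise

theorem inv_mul_eq_inv_mul_of_mul_inv_eq {G : Type*} [Group G] {a b c d : G}
    (h : a * b⁻¹ = c * d⁻¹) : a⁻¹ * c = b⁻¹ * d := by
  rw [inv_mul_eq_iff_eq_mul, ← mul_assoc, ← mul_inv_eq_iff_eq_mul, h]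

namespace AlgDynSys

variable {G P : Type*} [Group G] [Monoid P] (A : AlgDynSys G P)

theorem θ_inv (p : P) (a : G) : A.θ p a⁻¹ = (A.θ p a)⁻¹ :=
  map_inv (A.θHom p) a

theorem θ_inv_mul (p : P) (a b : G) : A.θ p (a⁻¹ * b) = (A.θ p a)⁻¹ * A.θ p b := by
  rw [A.θ_hom, A.θ_inv]

theorem exists_θ_lcm_eq {p q r : P} (hpq : rIdeal p ∩ rIdeal q = rIdeal r) {x y : G}
    (hxy : A.θ p x = A.θ q y) : ∃ z, A.θ r z = A.θ p x := by
  have hmem : A.θ p x ∈ Set.range (A.θ p) ∩ Set.range (A.θ q) := ⟨⟨x, rfl⟩, ⟨y, hxy.symm⟩⟩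
  rwa [A.respects p q r hpq] at hmem

theorem eq_θ_of_θ_mul_eq {p p' r : P} (hp' : p * p' = r) {x z : G}
    (hz : A.θ r z = A.θ p x) : x = A.θ p' z := by
  apply A.θ_inj p
  rw [← A.θ_mul, hp', hz]

end AlgDynSys

/-- well-definedness of relation (A2): if `pP ∩ qP = rP`, `pp' = qq' = r`,
and `θ_p(k)·θ_q(ℓ)⁻¹ = θ_p(k₁)·θ_q(ℓ₁)⁻¹`, then there is `k₂ ∈ G` with
`k⁻¹k₁ = θ_{p'}(k₂)` and `ℓ⁻¹ℓ₁ = θ_{q'}(k₂)`. -/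
theorem A2_well_defined {G P : Type*} [Group G] [Monoid P] (A : AlgDynSys G P)
    (p q r p' q' : P) (hpq : rIdeal p ∩ rIdeal q = rIdeal r)
    (hp' : p * p' = r) (hq' : q * q' = r)
    (k l k₁ l₁ : G)
    (h : A.θ p k * (A.θ q l)⁻¹ = A.θ p k₁ * (A.θ q l₁)⁻¹) :
    ∃ k₂ : G, k⁻¹ * k₁ = A.θ p' k₂ ∧ l⁻¹ * l₁ = A.θ q' k₂ := by
  have key : A.θ p (k⁻¹ * k₁) = A.θ q (l⁻¹ * l₁) := by
    rw [A.θ_inv_mul, A.θ_inv_mul]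
    exact inv_mul_eq_inv_mul_of_mul_inv_eq h
  obtain ⟨k₂, hk₂⟩ := A.exists_θ_lcm_eq hpq key
  exact ⟨k₂, A.eq_θ_of_θ_mul_eq hp' hk₂, A.eq_θ_of_θ_mul_eq hq' (hk₂.trans key)⟩
end
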